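/- arXiv:math/9910044 — 2 statements merged into one kernel-verified Lean document; each statement's English description precedes it below -/
import Mathlib

section
/- For every natural number k ≥ 1 there exists a constant A > 0, depending only on k, with the following property: for every polynomial f with real coefficients of degree exactly k and every natural number l with l ≥ 2k, if (i) f(0) = 1, (ii) f(i) ≥ 0 for every integer i ≥ 0, and (iii) for every integer i with 0 ≤ i ≤ l, f(l − i) > 0 implies f(i) ≤ f(l), then k! · (leading coefficient of f) ≤ A · f(l). -/
open Polynomial Finset

/-- Leading coefficient of a Lagrange basis polynomial. -/
lemma lagrange_basis_leadingCoeff {s : Finset ℕ} {i : ℕ} (hi : i ∈ s) :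
    (Lagrange.basis s (fun n : ℕ => (n : ℝ)) i).leadingCoeff
      = ∏ j ∈ s.erase i, (((i : ℝ) - (j : ℝ))⁻¹) := by
  rw [Lagrange.basis, leadingCoeff_prod]
  refine Finset.prod_congr rfl fun j hj => ?_
  have hij : (i : ℝ) ≠ (j : ℝ) := by
    have : j ≠ i := (Finset.mem_erase.mp hj).1
    exact_mod_cast fun h => this (by exact_mod_cast h.symm)
  rw [Lagrange.basisDivisor, leadingCoeff_mul, leadingCoeff_C,
    (monic_X_sub_C _).leadingCoeff, mul_one]

/-- Polynomial core of Theorem 2.3: for every `k ≥ 1` there is a constant `A > 0`,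
depending only on `k`, such that for every real polynomial `f` of degree exactly `k`
and every `l ≥ 2k` satisfying properties (i)–(iii), we have
`k! · leadingCoeff f ≤ A · f(l)`. -/
theorem stmt0 (k : ℕ) (hk : 1 ≤ k) :
    ∃ A : ℝ, 0 < A ∧
      ∀ (f : Polynomial ℝ) (l : ℕ),
        f.degree = (k : ℕ) →
        2 * k ≤ l →
        f.eval 0 = 1 →
        (∀ i : ℕ, 0 ≤ f.eval (i : ℝ)) →
        (∀ i : ℕ, i ≤ l → 0 < f.eval ((l - i : ℕ) : ℝ) → f.eval (i : ℝ) ≤ f.eval (l : ℝ)) →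
        (k.factorial : ℝ) * f.leadingCoeff ≤ A * f.eval (l : ℝ) := by
  refine ⟨(k + 1) * k.factorial, by positivity, ?_⟩
  intro f l hdeg hl h0 hnn hmono
  have hf0 : f ≠ 0 := fun h => by simp [h] at hdeg
  have hnd : f.natDegree = k := natDegree_eq_of_degree_eq_some hdeg
  -- bad points: x ≤ l with f(l-x) = 0
  set v : ℕ → ℝ := fun n : ℕ => (n : ℝ) with hv
  have hvinj : Function.Injective v := fun a b h => Nat.cast_injective h
  set B : Finset ℕ := (Finset.range (l + 1)).filter
      (fun x => f.eval (((l - x : ℕ) : ℝ)) = 0) with hB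
  have hBcard : B.card ≤ k := by
    have hinj : Set.InjOn (fun x : ℕ => ((l - x : ℕ) : ℝ)) B := by
      intro a ha b hb hab
      have ha' : a ≤ l := Nat.lt_succ_iff.mp (Finset.mem_range.mp (Finset.mem_filter.mp ha).1)
      have hb' : b ≤ l := Nat.lt_succ_iff.mp (Finset.mem_range.mp (Finset.mem_filter.mp hb).1)
      have : l - a = l - b := Nat.cast_injective hab
      omega
    have himg : B.image (fun x : ℕ => ((l - x : ℕ) : ℝ)) ⊆ f.roots.toFinset := by
      intro y hy
      obtain ⟨x, hx, rfl⟩ := Finset.mem_image.mp hy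
      have := (Finset.mem_filter.mp hx).2
      rw [Multiset.mem_toFinset, mem_roots hf0]
      simpa [IsRoot] using this
    calc B.card = (B.image (fun x : ℕ => ((l - x : ℕ) : ℝ))).card :=
          (Finset.card_image_of_injOn hinj).symm
      _ ≤ f.roots.toFinset.card := Finset.card_le_card himg
      _ ≤ Multiset.card f.roots := f.roots.toFinset_card_le
      _ ≤ f.natDegree := f.card_roots'
      _ = k := hnd
  -- good points
  set G : Finset ℕ := (Finset.range (l + 1)) \ B with hG
  have hGcard : k + 1 ≤ G.card := by
    have : G.card = l + 1 - B.card := by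
      rw [hG, Finset.card_sdiff_of_subset (Finset.filter_subset _ _), Finset.card_range]
    omega
  obtain ⟨s, hsG, hscard⟩ := Finset.exists_subset_card_eq hGcard
  have hinjs : Set.InjOn v s := hvinj.injOn
  have hflnn : 0 ≤ f.eval ((l : ℕ) : ℝ) := hnn l
  -- for each good point, f(x) ≤ f(l)
  have hgood : ∀ x ∈ s, 0 ≤ f.eval (v x) ∧ f.eval (v x) ≤ f.eval ((l : ℕ) : ℝ) := by
    intro x hx
    have hxG := hsG hx
    have hxl : x ≤ l := Nat.lt_succ_iff.mp (Finset.mem_range.mp (Finset.mem_sdiff.mp hxG).1)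
    have hxnB : x ∉ B := (Finset.mem_sdiff.mp hxG).2
    have hne : f.eval (((l - x : ℕ) : ℝ)) ≠ 0 := by
      intro h
      exact hxnB (Finset.mem_filter.mpr ⟨Finset.mem_range.mpr (by omega), h⟩)
    have hpos : 0 < f.eval (((l - x : ℕ) : ℝ)) := lt_of_le_of_ne (hnn _) (Ne.symm hne)
    exact ⟨hnn x, hmono x hxl hpos⟩
  -- Lagrange interpolation
  have hdlt : f.degree < (s.card : ℕ) := by rw [hdeg, hscard]; exact_mod_cast Nat.lt_succ_self k
  have hinterp : Lagrange.interpolate s v (fun i => f.eval (v i)) = f :=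
    (Lagrange.eq_interpolate hinjs hdlt).symm
  -- leading coefficient formula
  have hlead : f.leadingCoeff
      = ∑ i ∈ s, f.eval (v i) * ∏ j ∈ s.erase i, (((i : ℝ) - (j : ℝ))⁻¹) := by
    have := congrArg (fun p : Polynomial ℝ => p.coeff k) hinterp
    simp only [Lagrange.interpolate_apply] at this
    rw [leadingCoeff, hnd, ← this, Polynomial.finset_sum_coeff]
    refine Finset.sum_congr rfl fun i hi => ?_
    rw [coeff_C_mul]
    congr 1
    have hbd : (Lagrange.basis s v i).natDegree = k := by
      rw [Lagrange.natDegree_basis hinjs hi, hscard]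
      omega
    rw [← hbd, ← leadingCoeff]
    exact lagrange_basis_leadingCoeff hi
  -- bound each coefficient product by 1 in absolute value
  have hprod : ∀ i ∈ s, |∏ j ∈ s.erase i, (((i : ℝ) - (j : ℝ))⁻¹)| ≤ 1 := by
    intro i _
    rw [Finset.abs_prod]
    refine Finset.prod_le_one (fun j _ => abs_nonneg _) (fun j hj => ?_)
    have hij : j ≠ i := (Finset.mem_erase.mp hj).1
    rw [abs_inv]
    have hneZ : ((i : ℤ) - (j : ℤ)) ≠ 0 := sub_ne_zero.mpr (by exact_mod_cast hij.symm)
    have h1Z : (1 : ℤ) ≤ |(i : ℤ) - (j : ℤ)| := Int.one_le_abs hneZ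
    have h1 : (1 : ℝ) ≤ |(i : ℝ) - (j : ℝ)| := by
      have : ((i : ℝ) - (j : ℝ)) = (((i : ℤ) - (j : ℤ) : ℤ) : ℝ) := by push_cast; ring
      rw [this, ← Int.cast_abs]
      exact_mod_cast h1Z
    exact inv_le_one_of_one_le₀ h1
  -- final estimate
  have key : (k.factorial : ℝ) * f.leadingCoeff
      ≤ ∑ i ∈ s, (k.factorial : ℝ) * f.eval ((l : ℕ) : ℝ) := by
    rw [hlead, Finset.mul_sum]
    refine Finset.sum_le_sum fun i hi => ?_
    obtain ⟨hfi0, hfil⟩ := hgood i hi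
    have hc := hprod i hi
    have hc' : (∏ j ∈ s.erase i, (((i : ℝ) - (j : ℝ))⁻¹)) ≤ 1 :=
      le_trans (le_abs_self _) hc
    calc (k.factorial : ℝ) * (f.eval (v i) * ∏ j ∈ s.erase i, (((i : ℝ) - (j : ℝ))⁻¹))
        ≤ (k.factorial : ℝ) * (f.eval (v i) * 1) := by
          apply mul_le_mul_of_nonneg_left _ (by positivity)
          exact mul_le_mul_of_nonneg_left hc' hfi0
      _ = (k.factorial : ℝ) * f.eval (v i) := by ring
      _ ≤ (k.factorial : ℝ) * f.eval ((l : ℕ) : ℝ) :=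
          mul_le_mul_of_nonneg_left hfil (by positivity)
  calc (k.factorial : ℝ) * f.leadingCoeff
      ≤ ∑ i ∈ s, (k.factorial : ℝ) * f.eval ((l : ℕ) : ℝ) := key
    _ = (s.card : ℝ) * ((k.factorial : ℝ) * f.eval ((l : ℕ) : ℝ)) := by
        rw [Finset.sum_const, nsmul_eq_mul]
    _ = ((k : ℝ) + 1) * (k.factorial : ℝ) * f.eval ((l : ℕ) : ℝ) := by
        rw [hscard]; push_cast; ring
    _ = ((k : ℝ) + 1) * (k.factorial : ℝ) * f.eval (l : ℝ) := by norm_num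
end

section
/- Let k ≥ 1 be a natural number, let f be a polynomial with real coefficients of degree exactly k, and let l be a natural number with l ≥ 2k. Assume (i) f(0) = 1, (ii) f(i) ≥ 0 for every integer i ≥ 0, and (iii) for every integer i with 0 ≤ i ≤ l, f(l − i) > 0 implies f(i) ≤ f(l). Then f(l) ≥ 1. -/
/-- Intermediate claim `f(0) = 1 ≤ f(l)` in the proof of Theorem 2.3: if `f` is a real
polynomial of degree exactly `k ≥ 1`, `l ≥ 2k`, and `f` satisfies properties (i)–(iii),
then `f(l) ≥ 1`. -/
theorem stmt2 (k : ℕ) (hk : 1 ≤ k) (f : Polynomial ℝ) (hdeg : f.degree = (k : ℕ))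
    (l : ℕ) (hl : 2 * k ≤ l)
    (h0 : f.eval 0 = 1)
    (hnonneg : ∀ i : ℕ, 0 ≤ f.eval (i : ℝ))
    (hcomp : ∀ i : ℕ, i ≤ l → 0 < f.eval ((l - i : ℕ) : ℝ) → f.eval (i : ℝ) ≤ f.eval (l : ℝ)) :
    1 ≤ f.eval (l : ℝ) := by
  classical
  by_contra hlt
  push_neg at hlt
  -- f(l) = 0
  have hl0 : f.eval (l : ℝ) = 0 := by
    rcases (hnonneg l).lt_or_eq with hpos | heq
    · have h := hcomp 0 (Nat.zero_le _) (by simpa using hpos)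
      simp only [Nat.cast_zero, h0] at h
      linarith
    · exact heq.symm
  have key : ∀ i : ℕ, i ≤ l → f.eval (i : ℝ) ≠ 0 → f.eval ((l - i : ℕ) : ℝ) = 0 := by
    intro i hi hne
    by_contra hne2
    have hpos : 0 < f.eval ((l - i : ℕ) : ℝ) := lt_of_le_of_ne (hnonneg _) (Ne.symm hne2)
    have h := hcomp i hi hpos
    rw [hl0] at h
    exact hne (le_antisymm h (hnonneg i))
  set g : ℕ → ℕ := fun j => if f.eval ((j : ℕ) : ℝ) = 0 then j else l - j with hg
  set S : Finset ℕ := (Finset.range (l + 1)).filter (fun i => f.eval ((i : ℕ) : ℝ) = 0) with hS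
  have hmem : ∀ j ∈ Finset.range (k + 1), g j ∈ S := by
    intro j hj
    simp only [Finset.mem_range] at hj
    have hjl : j ≤ l := by omega
    by_cases hz : f.eval ((j : ℕ) : ℝ) = 0
    · simp only [hS, hg, Finset.mem_filter, Finset.mem_range, if_pos hz]
      exact ⟨by omega, hz⟩
    · simp only [hS, hg, Finset.mem_filter, Finset.mem_range, if_neg hz]
      exact ⟨by omega, key j hjl hz⟩
  have hinj : Set.InjOn g (Finset.range (k + 1)) := by
    intro a ha b hb hab
    simp only [Finset.coe_range, Set.mem_Iio] at ha hb
    have h0a : f.eval ((0 : ℕ) : ℝ) ≠ 0 := by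
      simp only [Nat.cast_zero, h0]; norm_num
    simp only [hg] at hab
    by_cases hza : f.eval ((a : ℕ) : ℝ) = 0 <;> by_cases hzb : f.eval ((b : ℕ) : ℝ) = 0 <;>
      simp only [if_pos, if_neg, hza, hzb, if_true, if_false] at hab
    · exact hab
    · -- a = l - b, with b's value nonzero, a's zero; then a + b = l ≥ 2k > a + b since a,b ≤ k
      -- but careful: need b ≤ l so a = l - b means a + b = l
      exfalso
      have hne : a ≠ b := fun h => hzb (h ▸ hza)
      omega
    · exfalso
      have hne : a ≠ b := fun h => hza (h ▸ hzb)
      omega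
    · have hal : a ≤ l := by omega
      have hbl : b ≤ l := by omega
      omega
  have hcard : k + 1 ≤ S.card := by
    have := Finset.card_le_card_of_injOn g hmem hinj
    simpa using this
  have hfne : f ≠ 0 := by
    intro h
    rw [h] at hdeg
    simp at hdeg
  have hsub : S.image (fun i : ℕ => (i : ℝ)) ⊆ f.roots.toFinset := by
    intro x hx
    simp only [Finset.mem_image] at hx
    obtain ⟨i, hi, rfl⟩ := hx
    simp only [hS, Finset.mem_filter] at hi
    rw [Multiset.mem_toFinset, Polynomial.mem_roots hfne]
    exact hi.2
  have hcard2 : (S.image (fun i : ℕ => (i : ℝ))).card = S.card :=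
    Finset.card_image_of_injective _ (fun a b => by exact_mod_cast id)
  have hk' : f.natDegree = k := Polynomial.natDegree_eq_of_degree_eq_some hdeg
  have : S.card ≤ k := by
    calc S.card = (S.image (fun i : ℕ => (i : ℝ))).card := hcard2.symm
      _ ≤ f.roots.toFinset.card := Finset.card_le_card hsub
      _ ≤ Multiset.card f.roots := Multiset.toFinset_card_le _
      _ ≤ f.natDegree := Polynomial.card_roots' f
      _ = k := hk'
  omega
end
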